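/- arXiv:1110.0938 — 2 statements merged into one kernel-verified Lean document; each statement's English description precedes it below -/
import Mathlib

section
/- Let T be a minimum spanning tree of a finite point set P ⊆ ℝ² and let c ∈ ℝ². Suppose (a, p_a) and (b, p_b) are edges of T with a ≠ b, d(p_a, c) ≤ 1/4, d(p_b, c) ≤ 1/4, d(a, p_a) ≥ 1 and d(b, p_b) ≥ 1. Then the angle ∠acb at the point c between the rays ca and cb exceeds π/5. -/
open scoped Classical
noncomputable section

/-- A point in the Euclidean plane. -/
abbrev Point : Type := EuclideanSpace ℝ (Fin 2)

/-- A link is an ordered pair (sender, receiver) of points. -/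
abbrev Link : Type := Point × Point

/-- The length of a link: the distance from its sender to its receiver. -/
def linkLen (l : Link) : ℝ := dist l.1 l.2

/-- The set `S` of links satisfies all the SINR constraints under the power
assignment `Pw` (path-loss exponent `α`, SINR threshold `β`, noise ignored). -/
def FeasibleWith (α β : ℝ) (S : Finset Link) (Pw : Link → ℝ) : Prop :=
  ∀ l ∈ S, β * ∑ l' ∈ S.erase l, Pw l' / dist l'.1 l.2 ^ α ≤ Pw l / linkLen l ^ α

/-- A set of links is feasible if some positive power assignment satisfies all
its SINR constraints. -/
def Feasible (α β : ℝ) (S : Finset Link) : Prop :=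
  ∃ Pw : Link → ℝ, (∀ l ∈ S, 0 < Pw l) ∧ FeasibleWith α β S Pw

/-- `S` is a partition of the link set `L` into `k` (possibly empty) sets. -/
def IsPartition (L : Finset Link) {k : ℕ} (S : Fin k → Finset Link) : Prop :=
  (∀ i, S i ⊆ L) ∧ (∀ l ∈ L, ∃ i, l ∈ S i) ∧
    ∀ i j : Fin k, i ≠ j → Disjoint (S i) (S j)

/-- Total Euclidean edge length of a graph on the point set `P`. -/
def treeWeight (P : Finset Point) (T : SimpleGraph ↥P) : ℝ :=
  (1 / 2) * ∑ p ∈ P.attach, ∑ q ∈ P.attach,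
    if T.Adj p q then dist (p : Point) (q : Point) else 0

/-- `T` is a minimum spanning tree of `P`: a spanning tree of the complete
graph on `P` of minimum total Euclidean edge length. -/
def IsMST (P : Finset Point) (T : SimpleGraph ↥P) : Prop :=
  T.IsTree ∧ ∀ T' : SimpleGraph ↥P, T'.IsTree → treeWeight P T ≤ treeWeight P T'

/-- `L` is an orientation of the edges of `T` into links: every link of `L`
is an oriented edge of `T`, and every edge of `T` appears in exactly one of
its two orientations. -/
def IsOrientationOf (P : Finset Point) (T : SimpleGraph ↥P) (L : Finset Link) : Prop :=
  (∀ l ∈ L, ∃ p q : ↥P, T.Adj p q ∧ l = ((p : Point), (q : Point))) ∧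
  (∀ p q : ↥P, T.Adj p q →
    (((p : Point), (q : Point)) ∈ L ∨ ((q : Point), (p : Point)) ∈ L)) ∧
  (∀ p q : ↥P, T.Adj p q →
    ¬((((p : Point), (q : Point)) ∈ L) ∧ (((q : Point), (p : Point)) ∈ L)))

/-!
Suppose `∠ a c b ≤ π / 5` and, by symmetry, `|b p_b| ≤ |a p_a| =: M`. Deleting the edge `a p_a`
splits `T` into the part containing `a` and the part containing `p_a`, and any edge joining the
two parts gives a spanning tree again, so by minimality it is at least as long as `M`. If `b`
lies on the side of `p_a`, the edge `a b` joins the parts; but `|c a|, |c b| ∈ [3/4, M + 1/4]`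
and `cos ∠ a c b ≥ 4/5` make `|a b| < M` by the law of cosines. If `b` lies on the side of `a`,
so does `p_b`, and the edge `p_b p_a` joins the parts, although `|p_b p_a| ≤ 1/2 < M`.
-/

namespace SimpleGraph

variable {V : Type*} {G : SimpleGraph V}

theorem Reachable.reachable_deleteEdges_or {u x y : V} (h : G.Reachable u x) (hxy : x ≠ y) :
    (G.deleteEdges {s(x, y)}).Reachable u x ∨ (G.deleteEdges {s(x, y)}).Reachable u y := by
  obtain ⟨p, hp⟩ := h.exists_isPath
  by_cases hep : s(x, y) ∈ p.edges
  · have hyp := p.snd_mem_support_of_mem_edges hep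
    have hxp := Walk.endpoint_notMem_support_takeUntil hp hyp hxy
    exact .inr ⟨(p.takeUntil y hyp).toDeleteEdges _ fun e he h ↦
      hxp <| (p.takeUntil y hyp).fst_mem_support_of_mem_edges ((Set.mem_singleton_iff.1 h) ▸ he)⟩
  · exact .inl ⟨p.toDeleteEdges _ fun e he h ↦ hep ((Set.mem_singleton_iff.1 h) ▸ he)⟩

end SimpleGraph

open Real SimpleGraph EuclideanGeometry

section treeWeight

variable {P : Finset Point}

theorem treeWeight_sup_of_disjoint {G H : SimpleGraph ↥P} (h : Disjoint G H) :
    treeWeight P (G ⊔ H) = treeWeight P G + treeWeight P H := by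
  have hGH (p q : ↥P) (hG : G.Adj p q) : ¬ H.Adj p q :=
    Set.disjoint_left.1 (disjoint_edgeSet.2 h) (show s(p, q) ∈ G.edgeSet from hG)
  simp only [treeWeight, ← mul_add, ← Finset.sum_add_distrib]
  congr! 3 with p _ q _
  by_cases hG : G.Adj p q <;> by_cases hH : H.Adj p q <;> simp_all

theorem treeWeight_edge {x y : ↥P} (hxy : x ≠ y) :
    treeWeight P (edge x y) = dist (x : Point) y := by
  calc treeWeight P (edge x y)
      = 1 / 2 * ∑ p ∈ P.attach, ∑ q ∈ P.attach,
          ((if q = y ∧ p = x then dist (x : Point) y else 0) +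
            (if q = x ∧ p = y then dist (x : Point) y else 0)) := by
        rw [treeWeight]
        congr! 3 with p _ q _
        by_cases h1 : q = y ∧ p = x
        · obtain ⟨rfl, rfl⟩ := h1; simp [edge_adj, hxy, hxy.symm]
        by_cases h2 : q = x ∧ p = y
        · obtain ⟨rfl, rfl⟩ := h2; simp [edge_adj, hxy, hxy.symm, dist_comm (q : Point)]
        have : ¬ (edge x y).Adj p q := by grind
        simp [this, h1, h2]
    _ = dist (x : Point) y := by
        simp only [Finset.sum_add_distrib, ite_and, Finset.sum_ite_eq', Finset.mem_attach, if_true]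
        ring

end treeWeight

theorem IsMST.dist_le_of_reachable_deleteEdges {P : Finset Point} {T : SimpleGraph ↥P}
    (hT : IsMST P T) {a pa x y : ↥P} (ha : T.Adj a pa)
    (hx : (T.deleteEdges {s(a, pa)}).Reachable x a)
    (hy : (T.deleteEdges {s(a, pa)}).Reachable y pa) :
    dist (a : Point) pa ≤ dist (x : Point) y := by
  set G := T.deleteEdges {s(a, pa)}
  have hbridge : ¬ G.Reachable a pa := isAcyclic_iff_forall_adj_isBridge.1 hT.1.2 ha
  have hxy : ¬ G.Reachable x y := fun h ↦ hbridge (hx.symm.trans (h.trans hy))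
  have hne : x ≠ y := fun h ↦ hxy (h ▸ .rfl)
  have hT' : (G ⊔ edge x y).IsTree := by
    refine ⟨(connected_iff_exists_forall_reachable _).2 ⟨a, fun v ↦ ?_⟩,
      (hT.1.2.anti (deleteEdges_le _)).sup_edge_of_not_reachable hxy⟩
    have hG : G ≤ G ⊔ edge x y := le_sup_left
    have hxy' : (G ⊔ edge x y).Adj x y := .inr ((edge_adj ..).2 ⟨.inl ⟨rfl, rfl⟩, hne⟩)
    rcases (hT.1.1.preconnected v a).reachable_deleteEdges_or ha.ne with h | h
    · exact (h.mono hG).symm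
    · exact (hx.mono hG).symm.trans (hxy'.reachable.trans ((hy.mono hG).trans (h.mono hG).symm))
  have hT_eq : T = G ⊔ edge a pa := (sdiff_sup_cancel ((edge_le_iff _).2 (.inr ha))).symm
  have hweight := hT.2 _ hT'
  rw [hT_eq, treeWeight_sup_of_disjoint (G := G) (H := edge a pa) disjoint_sdiff_self_left,
    treeWeight_sup_of_disjoint ((disjoint_edge _).2 fun h ↦ hxy h.reachable),
    treeWeight_edge ha.ne, treeWeight_edge hne] at hweight
  linarith

theorem sq_add_sq_sub_eight_fifths_mul_lt_sq {r s M : ℝ} (hM : 1 ≤ M) (hr : 3 / 4 ≤ r)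
    (hr' : r ≤ M + 1 / 4) (hs : 3 / 4 ≤ s) (hs' : s ≤ M + 1 / 4) :
    r ^ 2 + s ^ 2 - 8 / 5 * (r * s) < M ^ 2 := by
  nlinarith [mul_nonneg (sub_nonneg.2 hr') (sub_nonneg.2 hs'),
    mul_nonneg (sub_nonneg.2 hr) (sub_nonneg.2 hs),
    mul_nonneg (sub_nonneg.2 hr') (sub_nonneg.2 hs),
    mul_nonneg (sub_nonneg.2 hs') (sub_nonneg.2 hr)]

theorem Real.four_fifths_le_cos {θ : ℝ} (h₀ : 0 ≤ θ) (h : θ ≤ π / 5) : 4 / 5 ≤ cos θ := by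
  have hcos := cos_le_cos_of_nonneg_of_le_pi h₀ (by linarith [pi_pos]) h
  rw [cos_pi_div_five] at hcos
  have h5 : (11 / 5 : ℝ) ≤ √5 := le_sqrt_of_sq_le (by norm_num)
  linarith

theorem EuclideanGeometry.dist_lt_of_angle_le_pi_div_five {V : Type*} [NormedAddCommGroup V]
    [InnerProductSpace ℝ V] {a b c : V} {M : ℝ} (hM : 1 ≤ M)
    (ha : 3 / 4 ≤ dist a c) (ha' : dist a c ≤ M + 1 / 4)
    (hb : 3 / 4 ≤ dist b c) (hb' : dist b c ≤ M + 1 / 4) (h : ∠ a c b ≤ π / 5) :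
    dist a b < M := by
  have hcos := Real.four_fifths_le_cos (angle_nonneg a c b) h
  have hrs : 0 ≤ dist a c * dist b c := by positivity
  have hsq : dist a b ^ 2 < M ^ 2 := by
    nlinarith [law_cos a c b, sq_add_sq_sub_eight_fifths_mul_lt_sq hM ha ha' hb hb']
  exact lt_of_pow_lt_pow_left₀ 2 (by linarith) hsq

theorem IsMST.pi_div_five_lt_angle_of_dist_le {P : Finset Point} {T : SimpleGraph ↥P}
    (hT : IsMST P T) {c : Point} {a b pa pb : ↥P} (hab : a ≠ b)
    (ha : T.Adj a pa) (hb : T.Adj b pb)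
    (hpa : dist (pa : Point) c ≤ 1 / 4) (hpb : dist (pb : Point) c ≤ 1 / 4)
    (hla : 1 ≤ dist (a : Point) pa) (hlb : 1 ≤ dist (b : Point) pb)
    (hle : dist (b : Point) pb ≤ dist (a : Point) pa) :
    π / 5 < ∠ (a : Point) c b := by
  by_contra! hangle
  have hac := dist_triangle (a : Point) pa c
  have hca := dist_triangle (a : Point) c pa
  have hbc := dist_triangle (b : Point) pb c
  have hcb := dist_triangle (b : Point) c pb
  rw [dist_comm c] at hca hcb
  have hab_lt : dist (a : Point) b < dist (a : Point) pa :=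
    dist_lt_of_angle_le_pi_div_five hla (by linarith) (by linarith) (by linarith)
      (by linarith) hangle
  have hpb_lt : dist (pb : Point) pa < dist (a : Point) pa := by
    linarith [dist_triangle (pb : Point) c pa, dist_comm (pa : Point) c]
  have hbpa : b ≠ pa := by rintro rfl; linarith
  have hbG : (T.deleteEdges {s(a, pa)}).Adj b pb :=
    (deleteEdges_adj ..).2 ⟨hb, by simp [hab.symm, hbpa]⟩
  rcases (hT.1.1.preconnected b a).reachable_deleteEdges_or ha.ne with h | h
  · exact (hT.dist_le_of_reachable_deleteEdges ha (hbG.symm.reachable.trans h) .rfl).not_gt hpb_lt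
  · exact (hT.dist_le_of_reachable_deleteEdges ha .rfl h).not_gt hab_lt

open EuclideanGeometry in
/-- if `(a, pₐ)` and `(b, p_b)` are edges of a minimum spanning
tree with `a ≠ b`, both edges of length at least `1`, and `pₐ`, `p_b` within
distance `1/4` of a point `c`, then the angle `∠ a c b` exceeds `π/5`. -/
theorem large_angle_at_disc_center (P : Finset Point) (T : SimpleGraph ↥P)
    (hT : IsMST P T) (c : Point) (a b pa pb : ↥P) (hab : a ≠ b)
    (ha : T.Adj a pa) (hb : T.Adj b pb)
    (hpa : dist (pa : Point) c ≤ 1 / 4) (hpb : dist (pb : Point) c ≤ 1 / 4)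
    (hla : 1 ≤ dist (a : Point) (pa : Point))
    (hlb : 1 ≤ dist (b : Point) (pb : Point)) :
    Real.pi / 5 < ∠ (a : Point) c (b : Point) := by
  rcases le_total (dist (b : Point) pb) (dist (a : Point) pa) with hle | hle
  · exact hT.pi_div_five_lt_angle_of_dist_le hab ha hb hpa hpb hla hlb hle
  · rw [angle_comm]
    exact hT.pi_div_five_lt_angle_of_dist_le hab.symm hb ha hpb hpa hlb hla hle
end
end

section
/- For every smooth power function p and every n, there exists a set X of n collinear points in ℝ² with the following property: if L is any set of links with endpoints in X such that every point of X is an endpoint of at least one link of L, then any partition of L into sets that are each SINR-feasible under the oblivious power assignment P_ℓ = p(ℓ) (where additionally each point appears in at most one link per set, reflecting half-duplex operation) must have at least n/2 parts. -/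
open scoped Classical
noncomputable section

/-- The point `(r, 0)` on the x-axis of the Euclidean plane. -/
def ptOnLine (r : ℝ) : Point := (EuclideanSpace.equiv (Fin 2) ℝ).symm ![r, 0]

/-- `g(x) = (1/2)·min(p(x), x^α/p(x))`. -/
def gfun (α : ℝ) (p : ℝ → ℝ) (x : ℝ) : ℝ := (1 / 2) * min (p x) (x ^ α / p x)

/-- A power function `p` is smooth if `p(x) ≥ x`, `p` is nondecreasing,
`p(x) ≤ x^α`, and `g(x) = (1/2)·min(p(x), x^α/p(x))` is monotone increasing
and tends to infinity. -/
def SmoothPower (α : ℝ) (p : ℝ → ℝ) : Prop :=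
  (∀ x, 0 < x → 0 < p x) ∧
  (∀ x, 0 < x → x ≤ p x) ∧
  (∀ x y, 0 < x → x ≤ y → p x ≤ p y) ∧
  (∀ x, 0 < x → p x ≤ x ^ α) ∧
  StrictMonoOn (gfun α p) (Set.Ioi (0 : ℝ)) ∧
  Filter.Tendsto (gfun α p) Filter.atTop Filter.atTop

/-! Put the points on a line at nonnegative positions, each so far to the right of the
earlier ones that `a ^ α < 2 g(b - a)` whenever `a < b`; as `g` is monotone, a link through the
rightmost of some points then has `2 g(ℓ) > D ^ α` for every distance `D` among the others.
If a link `(a, b)` survives the interference of a link `(c, d)`, then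
`p |cd| · |ab| ^ α ≤ p |ab| · |cb| ^ α`, and the bounds `x ≤ p x ≤ x ^ α` turn this into
`2 g(|ab|) ≤ |cb| ^ α` and `2 g(|cd|) ≤ |cb| ^ α`. Of the two links in a slot, use the SINR
constraint whose cross distance avoids the rightmost of the four endpoints: the link through
that endpoint then violates the bound. So every slot holds at most one link, and covering
`n` points takes at least `n / 2` links. -/

open Real

lemma dist_ptOnLine (a b : ℝ) : dist (ptOnLine a) (ptOnLine b) = |a - b| := by
  rw [EuclideanSpace.dist_eq]
  simp [ptOnLine, Fin.sum_univ_two, Real.dist_eq, Real.sqrt_sq_eq_abs]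

lemma ptOnLine_injective : Function.Injective ptOnLine := fun a b h => by
  simpa [sub_eq_zero] using (dist_ptOnLine a b).symm.trans (dist_eq_zero.2 h)

lemma collinear_ptOnLine_image (A : Set ℝ) : Collinear ℝ (ptOnLine '' A) := by
  rw [collinear_iff_exists_forall_eq_smul_vadd]
  refine ⟨ptOnLine 0, ptOnLine 1, ?_⟩
  rintro _ ⟨r, -, rfl⟩
  refine ⟨r, ?_⟩
  ext i
  fin_cases i <;> simp [ptOnLine]

lemma card_le_two_mul_card_of_forall_mem_endpoints {V : Type*} {X : Finset V}
    {L : Finset (V × V)} (hX : ∀ x ∈ X, ∃ l ∈ L, x = l.1 ∨ x = l.2) :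
    X.card ≤ 2 * L.card := by
  have hsub : X ⊆ L.biUnion fun l => {l.1, l.2} := by
    intro x hx
    obtain ⟨l, hl, hxl⟩ := hX x hx
    exact Finset.mem_biUnion.2 ⟨l, hl, by rcases hxl with rfl | rfl <;> simp⟩
  calc X.card ≤ (L.biUnion fun l => {l.1, l.2}).card := Finset.card_le_card hsub
    _ ≤ ∑ l ∈ L, ({l.1, l.2} : Finset V).card := Finset.card_biUnion_le
    _ ≤ ∑ _l ∈ L, 2 := Finset.sum_le_sum fun l _ => Finset.card_insert_le _ _
    _ = 2 * L.card := by rw [Finset.sum_const, smul_eq_mul, mul_comm]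

lemma IsPartition.card_le_sum_card {L : Finset Link} {k : ℕ} {S : Fin k → Finset Link}
    (h : IsPartition L S) : L.card ≤ ∑ i, (S i).card := by
  have hsub : L ⊆ Finset.univ.biUnion S := fun l hl =>
    let ⟨i, hi⟩ := h.2.1 l hl
    Finset.mem_biUnion.2 ⟨i, Finset.mem_univ i, hi⟩
  exact (Finset.card_le_card hsub).trans Finset.card_biUnion_le

section

variable {α β : ℝ} {p : ℝ → ℝ}

lemma FeasibleWith.single_interferer_le {S : Finset Link} {Pw : Link → ℝ}
    (h : FeasibleWith α β S Pw) (hβ : 1 ≤ β) (hPw : ∀ l ∈ S, 0 ≤ Pw l) {l l' : Link}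
    (hl : l ∈ S) (hl' : l' ∈ S) (hne : l' ≠ l) :
    Pw l' / dist l'.1 l.2 ^ α ≤ Pw l / linkLen l ^ α := by
  have hterm : ∀ w ∈ S.erase l, 0 ≤ Pw w / dist w.1 l.2 ^ α := fun w hw =>
    div_nonneg (hPw w (Finset.mem_of_mem_erase hw)) (rpow_nonneg dist_nonneg α)
  calc Pw l' / dist l'.1 l.2 ^ α ≤ ∑ w ∈ S.erase l, Pw w / dist w.1 l.2 ^ α :=
        Finset.single_le_sum hterm (Finset.mem_erase.2 ⟨hne, hl'⟩)
    _ ≤ β * ∑ w ∈ S.erase l, Pw w / dist w.1 l.2 ^ α :=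
        le_mul_of_one_le_left (Finset.sum_nonneg hterm) hβ
    _ ≤ Pw l / linkLen l ^ α := h l hl

/-- A link of length `x` that survives an interferer of length `x'` whose sender is at
distance `D` from its receiver. -/
lemma SmoothPower.two_mul_gfun_le_of_interference (hp : SmoothPower α p) {x x' D : ℝ}
    (hx : 0 < x) (hx' : 1 ≤ x') (hD : 0 < D) (h : p x' / D ^ α ≤ p x / x ^ α) :
    2 * gfun α p x ≤ D ^ α ∧ 2 * gfun α p x' ≤ D ^ α := by
  obtain ⟨hp_pos, hp_ge, -, hp_le, -⟩ := hp
  have hxα : 0 < x ^ α := rpow_pos_of_pos hx α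
  have hcross : p x' * x ^ α ≤ p x * D ^ α := by
    rwa [div_le_div_iff₀ (rpow_pos_of_pos hD α) hxα] at h
  have htwo : ∀ y, 2 * gfun α p y = min (p y) (y ^ α / p y) := fun y => by
    rw [gfun]; ring
  rw [htwo, htwo]
  constructor
  · refine (min_le_right _ _).trans ?_
    rw [div_le_iff₀ (hp_pos x hx)]
    nlinarith [hp_ge x' (by linarith)]
  · refine (min_le_left _ _).trans (le_of_mul_le_mul_right ?_ hxα)
    calc p x' * x ^ α ≤ p x * D ^ α := hcross
      _ ≤ x ^ α * D ^ α := mul_le_mul_of_nonneg_right (hp_le x hx) (rpow_nonneg hD.le α)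
      _ = D ^ α * x ^ α := mul_comm _ _

def IsSparse (α : ℝ) (p : ℝ → ℝ) (A : Set ℝ) : Prop :=
  ∀ a ∈ A, 0 ≤ a ∧ ∀ b ∈ A, a < b → 1 ≤ b - a ∧ a ^ α < 2 * gfun α p (b - a)

lemma IsSparse.insert {A : Set ℝ} (hA : IsSparse α p A) (hg : MonotoneOn (gfun α p) (Set.Ioi 0))
    (hα : 0 ≤ α) {M x : ℝ} (hM₀ : 0 ≤ M) (hM : ∀ a ∈ A, a ≤ M) (hx : 1 ≤ x)
    (hMx : M ^ α < 2 * gfun α p x) : IsSparse α p (insert (M + x) A) := by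
  rintro a (rfl | ha)
  · refine ⟨by linarith, ?_⟩
    rintro b (rfl | hb) hab
    · exact absurd hab (lt_irrefl _)
    · linarith [hM b hb]
  · refine ⟨(hA a ha).1, ?_⟩
    rintro b (rfl | hb) hab
    · have hxle : x ≤ M + x - a := by linarith [hM a ha]
      refine ⟨hx.trans hxle, ?_⟩
      calc a ^ α ≤ M ^ α := rpow_le_rpow (hA a ha).1 (hM a ha) hα
        _ < 2 * gfun α p x := hMx
        _ ≤ 2 * gfun α p (M + x - a) := by
          gcongr
          exact hg (Set.mem_Ioi.2 (by linarith)) (Set.mem_Ioi.2 (by linarith)) hxle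
    · exact (hA a ha).2 b hb hab

lemma SmoothPower.exists_isSparse (hp : SmoothPower α p) (hα : 0 ≤ α) (n : ℕ) :
    ∃ A : Finset ℝ, A.card = n ∧ IsSparse α p A := by
  obtain ⟨-, -, -, -, hg_mono, hg_top⟩ := hp
  induction n with
  | zero => exact ⟨∅, rfl, by simp [IsSparse]⟩
  | succ n ih =>
    obtain ⟨A, hcard, hA⟩ := ih
    obtain ⟨M, hM⟩ := A.bddAbove
    set M' := max M 0
    obtain ⟨x, hgx, hx⟩ :=
      ((hg_top.eventually_gt_atTop (M' ^ α / 2)).and (Filter.eventually_ge_atTop 1)).exists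
    have hM' : ∀ a ∈ (A : Set ℝ), a ≤ M' := fun a ha => (hM ha).trans (le_max_left _ _)
    refine ⟨insert (M' + x) A, ?_, ?_⟩
    · rw [Finset.card_insert_of_notMem fun h => by linarith [hM' _ h], hcard]
    · rw [Finset.coe_insert]
      exact hA.insert hg_mono.monotoneOn hα (le_max_right _ _) hM' hx (by linarith)

lemma IsSparse.rpow_abs_sub_lt {A : Set ℝ} (hA : IsSparse α p A)
    (hg : MonotoneOn (gfun α p) (Set.Ioi 0)) (hα : 0 ≤ α) {z y u v : ℝ} (hz : z ∈ A)
    (hy : y ∈ A) (hu : u ∈ A) (hv : v ∈ A) (hyz : y < z) (huz : u < z) (hvz : v < z) :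
    |u - v| ^ α < 2 * gfun α p (z - y) := by
  have hw : max (max u v) y ∈ A := by
    rcases max_choice (max u v) y with h | h <;> rw [h]
    · rcases max_choice u v with h' | h' <;> rw [h'] <;> assumption
    · exact hy
  set w := max (max u v) y
  have hwz : w < z := max_lt (max_lt huz hvz) hyz
  have huvw : |u - v| ≤ w := by
    rw [abs_sub_le_iff]
    constructor <;> linarith [(hA u hu).1, (hA v hv).1, le_max_left (max u v) y,
      le_max_right (max u v) y, le_max_left u v, le_max_right u v]
  obtain ⟨hgap, hgw⟩ := (hA w hw).2 z hz hwz
  calc |u - v| ^ α ≤ w ^ α := rpow_le_rpow (abs_nonneg _) huvw hα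
    _ < 2 * gfun α p (z - w) := hgw
    _ ≤ 2 * gfun α p (z - y) := by
      gcongr
      exact hg (Set.mem_Ioi.2 (by linarith)) (Set.mem_Ioi.2 (by linarith)) (by linarith [le_max_right (max u v) y])

lemma IsSparse.one_le_abs_sub {A : Set ℝ} (hA : IsSparse α p A) {a b : ℝ} (ha : a ∈ A)
    (hb : b ∈ A) (hab : a ≠ b) : 1 ≤ |a - b| := by
  rcases hab.lt_or_gt with h | h
  · rw [abs_sub_comm, abs_of_pos (sub_pos.2 h)]; exact ((hA a ha).2 b hb h).1
  · rw [abs_of_pos (sub_pos.2 h)]; exact ((hA b hb).2 a ha h).1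

lemma IsSparse.not_mutual_interference {A : Set ℝ} (hA : IsSparse α p A) (hp : SmoothPower α p)
    (hα : 0 ≤ α) {a b c d : ℝ} (ha : a ∈ A) (hb : b ∈ A) (hc : c ∈ A) (hd : d ∈ A)
    (hab : a ≠ b) (hcd : c ≠ d) (hac : a ≠ c) (had : a ≠ d) (hbc : b ≠ c) (hbd : b ≠ d)
    (h₁ : p |c - d| / |c - b| ^ α ≤ p |a - b| / |a - b| ^ α)
    (h₂ : p |a - b| / |a - d| ^ α ≤ p |c - d| / |c - d| ^ α) : False := by
  have hg : MonotoneOn (gfun α p) (Set.Ioi 0) := hp.2.2.2.2.1.monotoneOn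
  have hlen_ab := hA.one_le_abs_sub ha hb hab
  have hlen_cd := hA.one_le_abs_sub hc hd hcd
  obtain ⟨hcb₁, hcb₂⟩ := hp.two_mul_gfun_le_of_interference (by linarith) hlen_cd
    (abs_pos.2 (sub_ne_zero.2 hbc.symm)) h₁
  obtain ⟨had₁, had₂⟩ := hp.two_mul_gfun_le_of_interference (by linarith) hlen_ab
    (abs_pos.2 (sub_ne_zero.2 had)) h₂
  obtain ⟨z, hz, haz, hbz, hcz, hdz⟩ :
      ∃ z, (a = z ∨ b = z ∨ c = z ∨ d = z) ∧ a ≤ z ∧ b ≤ z ∧ c ≤ z ∧ d ≤ z :=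
    ⟨max (max a b) (max c d), by grind, by grind, by grind, by grind, by grind⟩
  rcases hz with rfl | rfl | rfl | rfl
  · have hb_lt := hbz.lt_of_ne hab.symm
    have := hA.rpow_abs_sub_lt hg hα ha hb hc hb hb_lt (hcz.lt_of_ne hac.symm) hb_lt
    rw [abs_of_pos (sub_pos.2 hb_lt)] at hcb₁
    linarith
  · have ha_lt := haz.lt_of_ne hab
    have := hA.rpow_abs_sub_lt hg hα hb ha ha hd ha_lt ha_lt (hdz.lt_of_ne hbd.symm)
    rw [abs_sub_comm, abs_of_pos (sub_pos.2 ha_lt)] at had₂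
    linarith
  · have hd_lt := hdz.lt_of_ne hcd.symm
    have := hA.rpow_abs_sub_lt hg hα hc hd ha hd hd_lt (haz.lt_of_ne hac) hd_lt
    rw [abs_of_pos (sub_pos.2 hd_lt)] at had₁
    linarith
  · have hc_lt := hcz.lt_of_ne hcd
    have := hA.rpow_abs_sub_lt hg hα hd hc hc hb hc_lt hc_lt (hbz.lt_of_ne hbd)
    rw [abs_sub_comm, abs_of_pos (sub_pos.2 hc_lt)] at hcb₂
    linarith

lemma IsSparse.card_le_one_of_feasibleWith {A : Set ℝ} (hA : IsSparse α p A)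
    (hp : SmoothPower α p) (hα : 0 ≤ α) (hβ : 1 ≤ β) {S : Finset Link}
    (hS : ∀ l ∈ S, l.1 ∈ ptOnLine '' A ∧ l.2 ∈ ptOnLine '' A ∧ l.1 ≠ l.2)
    (hfeas : FeasibleWith α β S fun l => p (linkLen l))
    (hhalf : ∀ l ∈ S, ∀ l' ∈ S, l ≠ l' →
      l.1 ≠ l'.1 ∧ l.1 ≠ l'.2 ∧ l.2 ≠ l'.1 ∧ l.2 ≠ l'.2) :
    S.card ≤ 1 := by
  rw [Finset.card_le_one]
  intro l hl l' hl'
  by_contra hne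
  have hpow : ∀ l ∈ S, 0 ≤ p (linkLen l) := fun l hl =>
    (hp.1 _ (dist_pos.2 (hS l hl).2.2)).le
  have h₁ := hfeas.single_interferer_le hβ hpow hl hl' (Ne.symm hne)
  have h₂ := hfeas.single_interferer_le hβ hpow hl' hl hne
  obtain ⟨hac, had, hbc, hbd⟩ := hhalf l hl l' hl' hne
  rcases l with ⟨_, _⟩
  rcases l' with ⟨_, _⟩
  obtain ⟨⟨a, ha, rfl⟩, ⟨b, hb, rfl⟩, hab⟩ := hS _ hl
  obtain ⟨⟨c, hc, rfl⟩, ⟨d, hd, rfl⟩, hcd⟩ := hS _ hl'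
  simp only [linkLen, dist_ptOnLine] at h₁ h₂
  exact hA.not_mutual_interference hp hα ha hb hc hd (ne_of_apply_ne ptOnLine hab)
    (ne_of_apply_ne ptOnLine hcd) (ne_of_apply_ne ptOnLine hac) (ne_of_apply_ne ptOnLine had)
    (ne_of_apply_ne ptOnLine hbc) (ne_of_apply_ne ptOnLine hbd) h₁ h₂

end

/-- for every smooth power function `p` and every `n` there are
`n` collinear points such that any structure of links covering every point,
partitioned into sets that are SINR-feasible under the oblivious power
assignment `P_ℓ = p(ℓ)` (with each point in at most one link per set,
reflecting half-duplex operation), needs at least `n/2` parts. -/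
theorem smooth_oblivious_power_needs_linear_slots (α β : ℝ)
    (hα : 2 < α) (hβ : 1 ≤ β) (p : ℝ → ℝ) (hp : SmoothPower α p) (n : ℕ) :
    ∃ X : Finset Point, X.card = n ∧ Collinear ℝ (X : Set Point) ∧
      ∀ L : Finset Link,
        (∀ l ∈ L, l.1 ∈ X ∧ l.2 ∈ X ∧ l.1 ≠ l.2) →
        (∀ x ∈ X, ∃ l ∈ L, x = l.1 ∨ x = l.2) →
        ∀ (k : ℕ) (S : Fin k → Finset Link), IsPartition L S →
          (∀ i, FeasibleWith α β (S i) (fun l => p (linkLen l))) →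
          (∀ i, ∀ l ∈ S i, ∀ l' ∈ S i, l ≠ l' →
            l.1 ≠ l'.1 ∧ l.1 ≠ l'.2 ∧ l.2 ≠ l'.1 ∧ l.2 ≠ l'.2) →
          (n : ℝ) / 2 ≤ (k : ℝ) := by
  have hα₀ : 0 ≤ α := by linarith
  obtain ⟨A, hcard, hA⟩ := hp.exists_isSparse hα₀ n
  refine ⟨A.image ptOnLine, by rw [Finset.card_image_of_injective _ ptOnLine_injective, hcard],
    by rw [Finset.coe_image]; exact collinear_ptOnLine_image _, ?_⟩
  intro L hL hcover k S hpart hfeas hhalf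
  have hslot : ∀ i, (S i).card ≤ 1 := fun i =>
    hA.card_le_one_of_feasibleWith hp hα₀ hβ
      (fun l hl => by simpa only [← Finset.mem_coe, Finset.coe_image] using hL l (hpart.1 i hl))
      (hfeas i) (hhalf i)
  have hn : n ≤ 2 * k := calc
    n = (A.image ptOnLine).card := by rw [Finset.card_image_of_injective _ ptOnLine_injective, hcard]
    _ ≤ 2 * L.card := card_le_two_mul_card_of_forall_mem_endpoints hcover
    _ ≤ 2 * ∑ i, (S i).card := Nat.mul_le_mul_left 2 hpart.card_le_sum_card
    _ ≤ 2 * k := by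
      gcongr
      simpa using Finset.sum_le_sum fun i (_ : i ∈ Finset.univ) => hslot i
  rw [div_le_iff₀ two_pos]
  exact_mod_cast (by omega : n ≤ k * 2)
end
end
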